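/- There exists a constant C>0 such that for every λ>0, every s>0 and every regular solution v of the auxiliary degenerate problem with right-hand side h ∈ L²(Q), setting w = e^{sφ} v, one has −s ∬_Q a φ_x a_x w_x² ≥ −K λ s ∫₀ᵀ ∫₀^{α'} a σ w_x² − C λ s ∬_{(0,T)×ω'} σ w_x². -/

import Mathlib

open MeasureTheory Set Real Filter

noncomputable section

/-- The sup norm of `ψ` on `[0,1]`. -/
def psiSup (ψ : ℝ → ℝ) : ℝ := ⨆ x : Icc (0:ℝ) 1, |ψ x.1|

/-- `Θ(t) = 1/(t(T-t))⁴`. -/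
def thetaFun (T t : ℝ) : ℝ := 1 / (t * (T - t)) ^ 4

/-- `η(x) = exp (λ(‖ψ‖_∞ + ψ x))`. -/
def etaFun (ψ : ℝ → ℝ) (lam x : ℝ) : ℝ := exp (lam * (psiSup ψ + ψ x))

/-- `σ(t,x) = Θ(t) η(x)`. -/
def sigmaFun (T : ℝ) (ψ : ℝ → ℝ) (lam t x : ℝ) : ℝ := thetaFun T t * etaFun ψ lam x

/-- `φ(t,x) = Θ(t) (exp (λ(‖ψ‖_∞ + ψ x)) - exp (3λ‖ψ‖_∞))`. -/
def phiFun (T : ℝ) (ψ : ℝ → ℝ) (lam t x : ℝ) : ℝ :=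
  thetaFun T t * (etaFun ψ lam x - exp (3 * (lam * psiSup ψ)))

/-- Partial derivative in the space variable. -/
def pderivX (f : ℝ → ℝ → ℝ) (t x : ℝ) : ℝ := deriv (fun y => f t y) x

/-- Partial derivative in the time variable. -/
def pderivT (f : ℝ → ℝ → ℝ) (t x : ℝ) : ℝ := deriv (fun τ => f τ x) t

/-- `w = e^{sφ} v`. -/
def wFun (T : ℝ) (ψ : ℝ → ℝ) (lam s : ℝ) (v : ℝ → ℝ → ℝ) (t x : ℝ) : ℝ :=
  exp (s * phiFun T ψ lam t x) * v t x

/-- The cylinder `(0,T) × (l,r)`. -/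
def QSub (T l r : ℝ) : Set (ℝ × ℝ) := Ioo 0 T ×ˢ Ioo l r

/-- Structural hypotheses on the degenerate coefficient `a` (whose derivative on `(0,1]`
is the given function `a'`): `a ∈ C([0,1]) ∩ C¹((0,1])` is nondecreasing, `a(0) = 0` and
`a > 0` on `(0,1]`. -/
structure DegenCoeff (a a' : ℝ → ℝ) : Prop where
  cont : ContinuousOn a (Icc 0 1)
  hasDeriv : ∀ x ∈ Ioc (0:ℝ) 1, HasDerivAt a (a' x) x
  contDeriv : ContinuousOn a' (Ioc 0 1)
  mono : MonotoneOn a (Icc 0 1)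
  zero : a 0 = 0
  pos : ∀ x ∈ Ioc (0:ℝ) 1, 0 < a x

/-- Weak degeneracy: `x a'(x) ≤ K a(x)` on `(0,1]` with `K ∈ [0,1)`. -/
def DegenWeak (a a' : ℝ → ℝ) (K : ℝ) : Prop :=
  0 ≤ K ∧ K < 1 ∧ ∀ x ∈ Ioc (0:ℝ) 1, x * a' x ≤ K * a x

/-- Strong degeneracy: `x a'(x) ≤ K a(x)` on `(0,1]` with `K ∈ [1,2)`, together with the
additional condition `θ a ≤ x a'` near zero, with `θ ∈ (1,K]` if `K > 1` and `θ ∈ (0,1)`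
if `K = 1`. -/
def DegenStrong (a a' : ℝ → ℝ) (K : ℝ) : Prop :=
  1 ≤ K ∧ K < 2 ∧ (∀ x ∈ Ioc (0:ℝ) 1, x * a' x ≤ K * a x) ∧
    ∃ θ δ : ℝ, 0 < δ ∧ δ ≤ 1 ∧ (∀ x ∈ Ioc (0:ℝ) δ, θ * a x ≤ x * a' x) ∧
      (1 < K → 1 < θ ∧ θ ≤ K) ∧ (K = 1 → 0 < θ ∧ θ < 1)

/-- The weight function `ψ ∈ C²([0,1])`, equal to `∫₀ˣ y/a(y) dy` on `[0, l)` and to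
`-∫_r^x y/a(y) dy` on `[r, 1]`. -/
structure WeightPsi (a : ℝ → ℝ) (l r : ℝ) (ψ : ℝ → ℝ) : Prop where
  smooth : ContDiffOn ℝ 2 ψ (Icc 0 1)
  left : ∀ x ∈ Ico (0:ℝ) l, ψ x = ∫ y in (0:ℝ)..x, y / a y
  right : ∀ x ∈ Icc r 1, ψ x = -∫ y in r..x, y / a y

/-- A regular solution of `v_t + (a v_x)_x = rhs` in `Q = (0,T)×(0,1)` with `v(t,1) = 0`:
`v, v_x` are continuous on `[0,T]×(0,1]`, `v_t, (a v_x)_x` are continuous on `(0,T)×(0,1]`. -/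
structure RegSol (T : ℝ) (a : ℝ → ℝ) (rhs : ℝ → ℝ → ℝ) (v : ℝ → ℝ → ℝ) : Prop where
  contV : ContinuousOn (fun p : ℝ × ℝ => v p.1 p.2) (Icc 0 T ×ˢ Ioc 0 1)
  contVx : ContinuousOn (fun p : ℝ × ℝ => pderivX v p.1 p.2) (Icc 0 T ×ˢ Ioc 0 1)
  contVt : ContinuousOn (fun p : ℝ × ℝ => pderivT v p.1 p.2) (Ioo 0 T ×ˢ Ioc 0 1)
  contAVxx : ContinuousOn
      (fun p : ℝ × ℝ => pderivX (fun t x => a x * pderivX v t x) p.1 p.2)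
      (Ioo 0 T ×ˢ Ioc 0 1)
  eq : ∀ t ∈ Ioo 0 T, ∀ x ∈ Ioo (0:ℝ) 1,
      pderivT v t x + pderivX (fun t x => a x * pderivX v t x) t x = rhs t x
  bdryOne : ∀ t ∈ Ioo 0 T, v t 1 = 0

/-- Dirichlet boundary condition at `x = 0` (weak degeneracy case). -/
def BdryWeak (T : ℝ) (v : ℝ → ℝ → ℝ) : Prop := ∀ t ∈ Ioo 0 T, v t 0 = 0

/-- Boundary condition `(a v_x)(t,0) = 0` at `x = 0` (strong degeneracy case),
understood as a one-sided limit. -/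
def BdryStrong (T : ℝ) (a : ℝ → ℝ) (v : ℝ → ℝ → ℝ) : Prop :=
  ∀ t ∈ Ioo 0 T, Tendsto (fun x => a x * pderivX v t x)
    (nhdsWithin 0 (Ioi 0)) (nhds 0)

end

/-!
Since `φ_x = λ σ ψ'`, the integrand `a φ_x a' w_x²` equals `λ σ (ψ' a a') w_x²`, and it suffices
to bound `ψ' a a'` pointwise on three strips. On `(0, α')` we have `ψ' = x / a`, so
`ψ' a a' = x a' ≤ K a`; on `(β', 1)` we have `ψ' = -x / a`, so `ψ' a a' = -x a' ≤ 0` because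
`a` is nondecreasing; on the compact `[α', β']` the continuous function `ψ' a a'` is bounded
by some `C`.
-/

open intervalIntegral Topology

lemma HasDerivAt.nonneg_of_monotoneOn_of_mem_nhds {f : ℝ → ℝ} {f' x : ℝ} {s : Set ℝ}
    (hd : HasDerivAt f f' x) (hf : MonotoneOn f s) (hs : s ∈ 𝓝 x) : 0 ≤ f' := by
  have hacc : AccPt x (𝓟 s) := by
    simpa using (PerfectSpace.univ_preperfect x (mem_univ x)).nhds_inter hs
  exact hd.hasDerivWithinAt.nonneg_of_monotoneOn hacc hf

lemma hasDerivAt_integral_of_continuousOn {f : ℝ → ℝ} {U : Set ℝ} (hU : IsOpen U)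
    (hf : ContinuousOn f U) {b x : ℝ} (hx : x ∈ U) (hi : IntervalIntegrable f volume b x) :
    HasDerivAt (fun u => ∫ y in b..u, f y) (f x) x :=
  integral_hasDerivAt_right hi (hf.stronglyMeasurableAtFilter hU x hx)
    (hf.continuousAt (hU.mem_nhds hx))

/-- If `f` is not integrable at the endpoint `c`, the interval integral is the junk value `0`
near `x`, so its derivative vanishes instead of being `f x`. -/
lemma deriv_integral_eq_or_eq_zero {f : ℝ → ℝ} {c d x : ℝ} (hf : ContinuousOn f (Ioo c d))
    (hx : x ∈ Ioo c d) :
    deriv (fun u => ∫ y in c..u, f y) x = f x ∨ deriv (fun u => ∫ y in c..u, f y) x = 0 := by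
  by_cases hi : IntervalIntegrable f volume c x
  · exact .inl (hasDerivAt_integral_of_continuousOn isOpen_Ioo hf hx hi).deriv
  right
  have hzero : (fun u => ∫ y in c..u, f y) =ᶠ[𝓝 x] fun _ => 0 := by
    filter_upwards [Ioo_mem_nhds hx.1 hx.2] with u hu
    refine integral_undef fun hu' => hi (hu'.trans (ContinuousOn.intervalIntegrable ?_))
    exact hf.mono fun y hy => ⟨(lt_min hu.1 hx.1).trans_le hy.1, hy.2.trans_lt (max_lt hu.2 hx.2)⟩
  rw [hzero.deriv_eq, deriv_const]

section Weight

variable {a a' ψ : ℝ → ℝ} {α' β' : ℝ}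

lemma DegenCoeff.deriv_nonneg (ha : DegenCoeff a a') {x : ℝ} (hx : x ∈ Ioo (0:ℝ) 1) :
    0 ≤ a' x :=
  (ha.hasDeriv x ⟨hx.1, hx.2.le⟩).nonneg_of_monotoneOn_of_mem_nhds ha.mono
    (Icc_mem_nhds hx.1 hx.2)

lemma DegenCoeff.continuousOn_id_div (ha : DegenCoeff a a') :
    ContinuousOn (fun x => x / a x) (Ioo 0 1) :=
  continuousOn_id.div (ha.cont.mono Ioo_subset_Icc_self) fun x hx =>
    (ha.pos x ⟨hx.1, hx.2.le⟩).ne'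

lemma WeightPsi.differentiableAt (hψ : WeightPsi a α' β' ψ) {x : ℝ} (hx : x ∈ Ioo (0:ℝ) 1) :
    DifferentiableAt ℝ ψ x :=
  (hψ.smooth.contDiffAt (Icc_mem_nhds hx.1 hx.2)).differentiableAt (by norm_num)

lemma WeightPsi.deriv_mul_le_of_mem_left (ha : DegenCoeff a a') (hψ : WeightPsi a α' β' ψ)
    (hα' : α' ≤ 1) {K : ℝ} (hK : 0 ≤ K) (hKa : ∀ x ∈ Ioc (0:ℝ) 1, x * a' x ≤ K * a x)
    {x : ℝ} (hx : x ∈ Ioo 0 α') :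
    deriv ψ x * (a x * a' x) ≤ K * a x := by
  have hx1 : x ∈ Ioc (0:ℝ) 1 := ⟨hx.1, hx.2.le.trans hα'⟩
  have hψ_eq : ψ =ᶠ[𝓝 x] fun u => ∫ y in (0:ℝ)..u, y / a y := by
    filter_upwards [Ioo_mem_nhds hx.1 hx.2] with u hu
    exact hψ.left u ⟨hu.1.le, hu.2⟩
  have hcont : ContinuousOn (fun y => y / a y) (Ioo 0 α') :=
    ha.continuousOn_id_div.mono (Ioo_subset_Ioo_right hα')
  rw [hψ_eq.deriv_eq]
  rcases deriv_integral_eq_or_eq_zero hcont hx with hd | hd <;> rw [hd]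
  · rw [div_mul_eq_mul_div, mul_div_assoc, mul_div_cancel_left₀ _ (ha.pos x hx1).ne']
    exact hKa x hx1
  · simpa using mul_nonneg hK (ha.pos x hx1).le

lemma WeightPsi.deriv_mul_nonpos_of_mem_right (ha : DegenCoeff a a')
    (hψ : WeightPsi a α' β' ψ) (hβ' : 0 < β') {x : ℝ} (hx : x ∈ Ioo β' 1) :
    deriv ψ x * (a x * a' x) ≤ 0 := by
  have hx1 : x ∈ Ioo (0:ℝ) 1 := ⟨hβ'.trans hx.1, hx.2⟩
  have hψ_eq : ψ =ᶠ[𝓝 x] fun u => -∫ y in β'..u, y / a y := by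
    filter_upwards [Ioo_mem_nhds hx.1 hx.2] with u hu
    exact hψ.right u ⟨hu.1.le, hu.2.le⟩
  have hint : IntervalIntegrable (fun y => y / a y) volume β' x := by
    refine ha.continuousOn_id_div.mono ?_ |>.intervalIntegrable
    rw [uIcc_of_le hx.1.le]
    exact fun y hy => ⟨hβ'.trans_le hy.1, hy.2.trans_lt hx.2⟩
  rw [hψ_eq.deriv_eq, deriv.fun_neg,
    (hasDerivAt_integral_of_continuousOn isOpen_Ioo ha.continuousOn_id_div hx1 hint).deriv,
    neg_mul, div_mul_eq_mul_div, mul_div_assoc,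
    mul_div_cancel_left₀ _ (ha.pos x ⟨hx1.1, hx1.2.le⟩).ne', neg_nonpos]
  exact mul_nonneg hx1.1.le (ha.deriv_nonneg hx1)

lemma WeightPsi.exists_deriv_mul_le_of_mem_middle (ha : DegenCoeff a a')
    (hψ : WeightPsi a α' β' ψ) (hα' : 0 < α') (hβ' : β' < 1) :
    ∃ C > 0, ∀ x ∈ Ioo α' β', deriv ψ x * (a x * a' x) ≤ C := by
  have hsub : Icc α' β' ⊆ Ioo 0 1 := fun y hy => ⟨hα'.trans_le hy.1, hy.2.trans_lt hβ'⟩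
  have hcont : ContinuousOn (fun x => deriv ψ x * (a x * a' x)) (Icc α' β') := by
    refine ContinuousOn.mul ?_ ((ha.cont.mono (hsub.trans Ioo_subset_Icc_self)).mul
      (ha.contDeriv.mono (hsub.trans Ioo_subset_Ioc_self)))
    exact ((hψ.smooth.mono Ioo_subset_Icc_self).continuousOn_deriv_of_isOpen isOpen_Ioo
      (by norm_num)).mono hsub
  obtain ⟨M, hM⟩ := isCompact_Icc.bddAbove_image hcont
  exact ⟨max M 0 + 1, by positivity, fun x hx =>
    (hM (mem_image_of_mem _ (Ioo_subset_Icc_self hx))).trans (by linarith [le_max_left M 0])⟩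

end Weight

lemma pderivX_phiFun (T : ℝ) {ψ : ℝ → ℝ} (lam t : ℝ) {x : ℝ} (hψ : DifferentiableAt ℝ ψ x) :
    pderivX (phiFun T ψ lam) t x = lam * sigmaFun T ψ lam t x * deriv ψ x := by
  have h : HasDerivAt (fun y => phiFun T ψ lam t y)
      (thetaFun T t * (etaFun ψ lam x * (lam * deriv ψ x))) x :=
    ((((hψ.hasDerivAt.const_add _).const_mul lam).exp).sub_const _).const_mul _
  rw [pderivX, h.deriv, sigmaFun]
  ring

lemma sigmaFun_nonneg (T : ℝ) (ψ : ℝ → ℝ) (lam t x : ℝ) : 0 ≤ sigmaFun T ψ lam t x := by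
  unfold sigmaFun thetaFun etaFun
  positivity

lemma mul_pderivX_phiFun_mul_le {a a' ψ : ℝ → ℝ} (T : ℝ) {lam : ℝ} (hlam : 0 ≤ lam)
    (t : ℝ) {x B : ℝ} (hψ : DifferentiableAt ℝ ψ x) (hB : deriv ψ x * (a x * a' x) ≤ B)
    (W : ℝ) :
    a x * pderivX (phiFun T ψ lam) t x * a' x * W ^ 2
      ≤ B * lam * (sigmaFun T ψ lam t x * W ^ 2) := by
  have hweight : 0 ≤ lam * (sigmaFun T ψ lam t x * W ^ 2) :=
    mul_nonneg hlam (mul_nonneg (sigmaFun_nonneg ..) (sq_nonneg W))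
  rw [pderivX_phiFun T lam t hψ]
  calc _ = lam * (sigmaFun T ψ lam t x * W ^ 2) * (deriv ψ x * (a x * a' x)) := by ring
    _ ≤ lam * (sigmaFun T ψ lam t x * W ^ 2) * B := mul_le_mul_of_nonneg_left hB hweight
    _ = _ := by ring

lemma setIntegral_prod_Ioo_split {f : ℝ × ℝ → ℝ} {A : Set ℝ} (hA : MeasurableSet A)
    {l m r : ℝ} (hlm : l < m) (hmr : m ≤ r) (hf : IntegrableOn f (A ×ˢ Ioo l r)) :
    ∫ p in A ×ˢ Ioo l r, f p = (∫ p in A ×ˢ Ioo l m, f p) + ∫ p in A ×ˢ Ioo m r, f p := by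
  have hae : (A ×ˢ Ioo m r : Set (ℝ × ℝ)) =ᵐ[volume] A ×ˢ Ico m r := by
    rw [Measure.volume_eq_prod]
    exact Measure.set_prod_ae_eq (ae_eq_refl A) Ioo_ae_eq_Ico
  have hunion : A ×ˢ Ioo l r = A ×ˢ Ioo l m ∪ A ×ˢ Ico m r := by
    rw [← prod_union, Ioo_union_Ico_eq_Ioo hlm hmr]
  have hdisj : Disjoint (A ×ˢ Ioo l m) (A ×ˢ Ico m r) :=
    disjoint_prod.mpr (.inr (Set.disjoint_left.mpr fun _ hx hx' => hx.2.not_ge hx'.1))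
  rw [setIntegral_congr_set hae, hunion, setIntegral_union hdisj (hA.prod measurableSet_Ico)
    (hf.mono_set (by rw [hunion]; exact subset_union_left))
    (hf.mono_set (by rw [hunion]; exact subset_union_right))]

lemma setIntegral_prod_Ioo_le_of_le_on_strips {f g₁ g₂ : ℝ × ℝ → ℝ} {A : Set ℝ}
    (hA : MeasurableSet A) {l m₁ m₂ r : ℝ} (h₁ : l < m₁) (h₂ : m₁ < m₂) (h₃ : m₂ < r)
    (hf : IntegrableOn f (A ×ˢ Ioo l r)) (hg₁ : IntegrableOn g₁ (A ×ˢ Ioo l m₁))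
    (hg₂ : IntegrableOn g₂ (A ×ˢ Ioo m₁ m₂)) (hfg₁ : ∀ p ∈ A ×ˢ Ioo l m₁, f p ≤ g₁ p)
    (hfg₂ : ∀ p ∈ A ×ˢ Ioo m₁ m₂, f p ≤ g₂ p) (hf₃ : ∀ p ∈ A ×ˢ Ioo m₂ r, f p ≤ 0) :
    ∫ p in A ×ˢ Ioo l r, f p ≤ (∫ p in A ×ˢ Ioo l m₁, g₁ p) + ∫ p in A ×ˢ Ioo m₁ m₂, g₂ p := by
  have hsub : A ×ˢ Ioo l m₂ ⊆ A ×ˢ Ioo l r := prod_mono subset_rfl (Ioo_subset_Ioo_right h₃.le)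
  have hf' : IntegrableOn f (A ×ˢ Ioo l m₂) := hf.mono_set hsub
  have hmeas : ∀ {u v : ℝ}, MeasurableSet (A ×ˢ Ioo u v) := hA.prod measurableSet_Ioo
  rw [setIntegral_prod_Ioo_split hA (h₁.trans h₂) h₃.le hf,
    setIntegral_prod_Ioo_split hA h₁ h₂.le hf']
  have i₁ := setIntegral_mono_on (hf'.mono_set (prod_mono subset_rfl
    (Ioo_subset_Ioo_right h₂.le))) hg₁ hmeas hfg₁
  have i₂ := setIntegral_mono_on (hf'.mono_set (prod_mono subset_rfl
    (Ioo_subset_Ioo_left h₁.le))) hg₂ hmeas hfg₂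
  have i₃ := setIntegral_nonpos (μ := volume) hmeas hf₃
  linarith

theorem lower_bound_ax_term_general
    (T αw βw α' β' K : ℝ)
    (hαw : 0 < αw) (hαα' : αw < α') (hα'β' : α' < β')
    (hβ'β : β' < βw) (hβw : βw < 1)
    (a a' ψ : ℝ → ℝ)
    (ha : DegenCoeff a a')
    (hK : DegenWeak a a' K ∨ DegenStrong a a' K)
    (hψ : WeightPsi a α' β' ψ) :
    ∃ C > (0:ℝ), ∀ lam > (0:ℝ), ∀ s > (0:ℝ),
      ∀ h v : ℝ → ℝ → ℝ,
        IntegrableOn (fun p : ℝ × ℝ => h p.1 p.2 ^ 2) (QSub T 0 1) →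
        RegSol T a h v →
        (BdryWeak T v ∨ BdryStrong T a v) →
        IntegrableOn (fun p : ℝ × ℝ => a p.2 * (pderivX (phiFun T ψ lam) p.1 p.2) * a' p.2 * (pderivX (wFun T ψ lam s v) p.1 p.2) ^ 2) (QSub T 0 1) →
        IntegrableOn (fun p : ℝ × ℝ => a p.2 * (sigmaFun T ψ lam p.1 p.2) * (pderivX (wFun T ψ lam s v) p.1 p.2) ^ 2) (QSub T 0 α') →
        IntegrableOn (fun p : ℝ × ℝ => (sigmaFun T ψ lam p.1 p.2) * (pderivX (wFun T ψ lam s v) p.1 p.2) ^ 2) (QSub T α' β') →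
        -(s) * (∫ p in QSub T 0 1, a p.2 * (pderivX (phiFun T ψ lam) p.1 p.2) * a' p.2 * (pderivX (wFun T ψ lam s v) p.1 p.2) ^ 2) ≥
          -(K * lam * s) * (∫ p in QSub T 0 α', a p.2 * (sigmaFun T ψ lam p.1 p.2) * (pderivX (wFun T ψ lam s v) p.1 p.2) ^ 2)
          - C * lam * s * (∫ p in QSub T α' β', (sigmaFun T ψ lam p.1 p.2) * (pderivX (wFun T ψ lam s v) p.1 p.2) ^ 2) := by
  have hα' : 0 < α' := hαw.trans hαα'
  have hβ' : β' < 1 := hβ'β.trans hβw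
  obtain ⟨hK0, hKa⟩ : 0 ≤ K ∧ ∀ x ∈ Ioc (0:ℝ) 1, x * a' x ≤ K * a x := by
    rcases hK with hK | hK
    exacts [⟨hK.1, hK.2.2⟩, ⟨zero_le_one.trans hK.1, hK.2.2.1⟩]
  obtain ⟨C, hC, hCψ⟩ := hψ.exists_deriv_mul_le_of_mem_middle ha hα' hβ'
  refine ⟨C, hC, fun lam hlam s hs h v _ _ _ hIQ hIA hIB => ?_⟩
  have hα'1 : α' < 1 := hα'β'.trans hβ'
  have hβ'0 : 0 < β' := hα'.trans hα'β'
  have key := setIntegral_prod_Ioo_le_of_le_on_strips measurableSet_Ioo hα' hα'β' hβ' hIQ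
    (hIA.const_mul (K * lam)) (hIB.const_mul (C * lam))
    (fun p hp => (mul_pderivX_phiFun_mul_le T hlam.le p.1
      (hψ.differentiableAt ⟨hp.2.1, hp.2.2.trans hα'1⟩)
      (hψ.deriv_mul_le_of_mem_left ha hα'1.le hK0 hKa hp.2) _).trans_eq (by ring))
    (fun p hp => mul_pderivX_phiFun_mul_le T hlam.le p.1
      (hψ.differentiableAt ⟨hα'.trans hp.2.1, hp.2.2.trans hβ'⟩) (hCψ _ hp.2) _)
    (fun p hp => (mul_pderivX_phiFun_mul_le T hlam.le p.1
      (hψ.differentiableAt ⟨hβ'0.trans hp.2.1, hp.2.2⟩)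
      (hψ.deriv_mul_nonpos_of_mem_right ha hβ'0 hp.2) _).trans_eq (by ring))
  rw [MeasureTheory.integral_const_mul, MeasureTheory.integral_const_mul] at key
  unfold QSub
  linarith [mul_le_mul_of_nonneg_left key hs.le]

theorem lower_bound_ax_term
    (T αw βw α' β' K : ℝ)
    (hT : 0 < T) (hαw : 0 < αw) (hαα' : αw < α') (hα'β' : α' < β')
    (hβ'β : β' < βw) (hβw : βw < 1)
    (a a' ψ : ℝ → ℝ)
    (ha : DegenCoeff a a')
    (hK : DegenWeak a a' K ∨ DegenStrong a a' K)
    (hψ : WeightPsi a α' β' ψ) :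
    ∃ C > (0:ℝ), ∀ lam > (0:ℝ), ∀ s > (0:ℝ),
      ∀ h v : ℝ → ℝ → ℝ,
        IntegrableOn (fun p : ℝ × ℝ => h p.1 p.2 ^ 2) (QSub T 0 1) →
        RegSol T a h v →
        (BdryWeak T v ∨ BdryStrong T a v) →
        IntegrableOn (fun p : ℝ × ℝ => a p.2 * (pderivX (phiFun T ψ lam) p.1 p.2) * a' p.2 * (pderivX (wFun T ψ lam s v) p.1 p.2) ^ 2) (QSub T 0 1) →
        IntegrableOn (fun p : ℝ × ℝ => a p.2 * (sigmaFun T ψ lam p.1 p.2) * (pderivX (wFun T ψ lam s v) p.1 p.2) ^ 2) (QSub T 0 α') →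
        IntegrableOn (fun p : ℝ × ℝ => (sigmaFun T ψ lam p.1 p.2) * (pderivX (wFun T ψ lam s v) p.1 p.2) ^ 2) (QSub T α' β') →
        -(s) * (∫ p in QSub T 0 1, a p.2 * (pderivX (phiFun T ψ lam) p.1 p.2) * a' p.2 * (pderivX (wFun T ψ lam s v) p.1 p.2) ^ 2) ≥
          -(K * lam * s) * (∫ p in QSub T 0 α', a p.2 * (sigmaFun T ψ lam p.1 p.2) * (pderivX (wFun T ψ lam s v) p.1 p.2) ^ 2)
          - C * lam * s * (∫ p in QSub T α' β', (sigmaFun T ψ lam p.1 p.2) * (pderivX (wFun T ψ lam s v) p.1 p.2) ^ 2) :=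
  lower_bound_ax_term_general T αw βw α' β' K hαw hαα' hα'β' hβ'β hβw a a' ψ ha hK hψ
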